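/- Let A and B be densely defined closable operators on a Hilbert space with σ(AB) ≠ ℂ and σ(BA) ≠ ℂ. If ker(A) = ker(A*) and ker(B) = ker(B*), then σ(AB) = σ(BA). -/

import Mathlib

open LinearPMap

set_option linter.unusedSectionVars false

noncomputable section

section BanachDefs

variable {H : Type*} [NormedAddCommGroup H] [NormedSpace ℂ H]

/-- Composition `g ∘ f` of unbounded operators, with the natural (maximal) domain
`{x ∈ dom f : f x ∈ dom g}`. -/
def LinearPMap.pComp (g f : H →ₗ.[ℂ] H) : H →ₗ.[ℂ] H where
  domain := (g.domain.comap f.toFun).map f.domain.subtype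
  toFun := g.toFun ∘ₗ (f.toFun.restrict (p := g.domain.comap f.toFun) (q := g.domain)
      (fun _ hx => hx)) ∘ₗ
    ((Submodule.equivMapOfInjective f.domain.subtype (Submodule.injective_subtype _)
      (g.domain.comap f.toFun)).symm).toLinearMap

/-- `n`-th power of an unbounded operator; `T^0` is the identity on all of `H`. -/
def LinearPMap.pPow (T : H →ₗ.[ℂ] H) : ℕ → (H →ₗ.[ℂ] H)
  | 0 => (LinearMap.id : H →ₗ[ℂ] H).toPMap ⊤
  | n + 1 => T.pComp (T.pPow n)

theorem LinearPMap.pPow_domain_succ_le (T : H →ₗ.[ℂ] H) (n : ℕ) :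
    (T.pPow (n + 1)).domain ≤ (T.pPow n).domain := by
  intro x hx
  simp_rw [pPow, pComp] at hx
  obtain ⟨y, -, rfl⟩ := hx
  exact y.2

theorem LinearPMap.pPow_domain_le (T : H →ₗ.[ℂ] H) {i n : ℕ} (h : i ≤ n) :
    (T.pPow n).domain ≤ (T.pPow i).domain := by
  induction n with
  | zero => exact Nat.le_zero.mp h ▸ le_rfl
  | succ n ih =>
    rcases Nat.lt_succ_iff_lt_or_eq.mp (Nat.lt_succ_of_le h) with h' | rfl
    · exact le_trans (T.pPow_domain_succ_le n) (ih (Nat.lt_succ_iff.mp h'))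
    · exact le_rfl

/-- `p(T)` for a complex polynomial `p`, defined on `D(T^n)` where `n = deg p`. -/
def LinearPMap.polyApp (p : Polynomial ℂ) (T : H →ₗ.[ℂ] H) : H →ₗ.[ℂ] H where
  domain := (T.pPow p.natDegree).domain
  toFun := ∑ i ∈ (Finset.range (p.natDegree + 1)).attach,
    p.coeff i.1 • ((T.pPow i.1).toFun ∘ₗ Submodule.inclusion
      (T.pPow_domain_le (Nat.lt_succ_iff.mp (Finset.mem_range.mp i.2))))

/-- `A - μ • I` with domain `dom A`. -/
def LinearPMap.subConst (A : H →ₗ.[ℂ] H) (μ : ℂ) : H →ₗ.[ℂ] H :=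
  ⟨A.domain, A.toFun - μ • A.domain.subtype⟩

/-- An unbounded operator is boundedly invertible if it is bijective from its domain onto `H`
with an everywhere-defined bounded (continuous) inverse. -/
def LinearPMap.IsBddInvertible (A : H →ₗ.[ℂ] H) : Prop :=
  ∃ B : H →L[ℂ] H, (∀ y : H, ∃ hy : B y ∈ A.domain, A ⟨B y, hy⟩ = y) ∧
    ∀ x : A.domain, B (A x) = (x : H)

/-- The spectrum of an unbounded operator: `μ ∉ σ(A)` iff `A - μI` is bijective with a
bounded everywhere-defined inverse. -/
def LinearPMap.pSpectrum (A : H →ₗ.[ℂ] H) : Set ℂ :=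
  {μ | ¬ (A.subConst μ).IsBddInvertible}

/-- The kernel of an unbounded operator, as a subset of `H`. -/
def LinearPMap.pKer (A : H →ₗ.[ℂ] H) : Set H :=
  {x | ∃ hx : x ∈ A.domain, A ⟨x, hx⟩ = 0}

/-- The range of an unbounded operator. -/
def LinearPMap.pRan (A : H →ₗ.[ℂ] H) : Set H :=
  Set.range fun x : A.domain => A x

/-- A bounded everywhere-defined operator seen as an unbounded operator. -/
def ContinuousLinearMap.toPMapTop (B : H →L[ℂ] H) : H →ₗ.[ℂ] H :=
  (B : H →ₗ[ℂ] H).toPMap ⊤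

end BanachDefs

section HilbertDefs

variable {H : Type*} [NormedAddCommGroup H] [InnerProductSpace ℂ H] [CompleteSpace H]

/-- A densely defined closed operator is quasinormal if `T T* T = T* T T`. -/
def LinearPMap.IsQuasinormal (T : H →ₗ.[ℂ] H) : Prop :=
  T.IsClosed ∧ Dense (T.domain : Set H) ∧
    T.pComp (T.adjoint.pComp T) = T.adjoint.pComp (T.pComp T)

/-- A densely defined closed operator is normal if `T* T = T T*` (an equality of unbounded
operators, domains included). -/
def LinearPMap.IsNormal (T : H →ₗ.[ℂ] H) : Prop :=
  T.IsClosed ∧ Dense (T.domain : Set H) ∧ T.adjoint.pComp T = T.pComp T.adjoint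

/-- A symmetric (not necessarily densely defined) operator. -/
def LinearPMap.IsSymm (T : H →ₗ.[ℂ] H) : Prop :=
  ∀ x y : T.domain, inner ℂ (T x) (y : H) = (inner ℂ (x : H) (T y) : ℂ)

/-- A paranormal operator: `‖Tx‖² ≤ ‖T²x‖ ‖x‖` for every `x ∈ D(T²)`. -/
def LinearPMap.IsParanormal (T : H →ₗ.[ℂ] H) : Prop :=
  ∀ (x : H) (hx : x ∈ T.domain) (hTx : T ⟨x, hx⟩ ∈ T.domain),
    ‖T ⟨x, hx⟩‖ ^ 2 ≤ ‖T ⟨T ⟨x, hx⟩, hTx⟩‖ * ‖x‖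

end HilbertDefs

end

/-!
For `μ ≠ 0` the algebra relating `AB - μ` and `BA - μ` carries over to unbounded operators,
except that solving `(BA - μ) x = y` by hand needs `y ∈ dom A`. A resolvent point `l` of `BA`
removes this restriction: `dom (BA)` lies in the range of `BA - μ`, hence so does the range of
`BA - l`, which is all of `H`. For `μ = 0`, surjectivity of `AB` makes `A` surjective, so
`ker A* = 0`, hence `ker A = 0`; this replaces the invertibility of `μ`. Finally, a bijective
`T - μ` is boundedly invertible as soon as some `T - l` is, because
`(T - μ) (T - l)⁻¹ = I + (l - μ) (T - l)⁻¹` is then a bounded bijection.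
-/

namespace LinearPMap

section Banach

variable {H : Type*} [NormedAddCommGroup H] [NormedSpace ℂ H]

theorem mem_pComp_domain {g f : H →ₗ.[ℂ] H} {x : H} :
    x ∈ (g.pComp f).domain ↔ ∃ hx : x ∈ f.domain, f ⟨x, hx⟩ ∈ g.domain := by
  constructor
  · rintro ⟨⟨y, hy⟩, hmem, rfl⟩
    exact ⟨hy, hmem⟩
  · rintro ⟨hx, hfx⟩
    exact ⟨⟨x, hx⟩, hfx, rfl⟩

theorem pComp_apply {g f : H →ₗ.[ℂ] H} (x : (g.pComp f).domain)
    (hx : (x : H) ∈ f.domain) (hfx : f ⟨x, hx⟩ ∈ g.domain) :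
    g.pComp f x = g ⟨f ⟨x, hx⟩, hfx⟩ := by
  set e := Submodule.equivMapOfInjective f.domain.subtype (Submodule.injective_subtype _)
      (g.domain.comap f.toFun)
  have he : e.symm x = ⟨⟨x, hx⟩, hfx⟩ := by
    refine e.injective ((e.apply_symm_apply _).trans (Subtype.ext ?_))
    rw [Submodule.coe_equivMapOfInjective_apply]
    rfl
  change g.toFun (f.toFun.restrict (p := g.domain.comap f.toFun) (q := g.domain)
      (fun _ hx => hx) (e.symm x)) = _
  rw [he]
  rfl

theorem subConst_apply (T : H →ₗ.[ℂ] H) (μ : ℂ) (x : (T.subConst μ).domain) :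
    T.subConst μ x = T ⟨x, x.2⟩ - μ • (x : H) := rfl

theorem subConst_zero (T : H →ₗ.[ℂ] H) : T.subConst 0 = T :=
  ext rfl fun x hx _ => by rw [subConst_apply T 0 ⟨x, hx⟩, zero_smul, sub_zero]

theorem pRan_eq_range (T : H →ₗ.[ℂ] H) : T.pRan = LinearMap.range T.toFun := rfl

theorem pRan_pComp_subset (g f : H →ₗ.[ℂ] H) : (g.pComp f).pRan ⊆ g.pRan := by
  rintro _ ⟨⟨x, hx⟩, rfl⟩
  obtain ⟨hxf, hfx⟩ := mem_pComp_domain.mp hx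
  exact ⟨⟨_, hfx⟩, (pComp_apply ⟨x, hx⟩ hxf hfx).symm⟩

theorem IsBddInvertible.bijective {T : H →ₗ.[ℂ] H} (hT : T.IsBddInvertible) :
    Function.Bijective T := by
  obtain ⟨R, hR_right, hR_left⟩ := hT
  refine ⟨fun x y hxy => Subtype.ext ?_, fun y => ⟨⟨R y, (hR_right y).1⟩, (hR_right y).2⟩⟩
  rw [← hR_left x, ← hR_left y, hxy]

theorem domain_subset_pRan_subConst {T : H →ₗ.[ℂ] H} {μ : ℂ} (hμ : μ ≠ 0)
    (hT : T.pRan ⊆ (T.subConst μ).pRan) : (T.domain : Set H) ⊆ (T.subConst μ).pRan := by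
  intro x hx
  have hTx : T ⟨x, hx⟩ ∈ (T.subConst μ).pRan := hT ⟨⟨x, hx⟩, rfl⟩
  have hx_eq : x = μ⁻¹ • (T ⟨x, hx⟩ - T.subConst μ ⟨x, hx⟩) := by
    rw [subConst_apply, sub_sub_cancel, inv_smul_smul₀ hμ]
  rw [pRan_eq_range] at hTx ⊢
  rw [hx_eq]
  exact Submodule.smul_mem _ _ (Submodule.sub_mem _ hTx ⟨_, rfl⟩)

theorem surjective_subConst_of_domain_subset {T : H →ₗ.[ℂ] H} {l μ : ℂ}
    (hl : Function.Surjective (T.subConst l)) (hdom : (T.domain : Set H) ⊆ (T.subConst μ).pRan) :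
    Function.Surjective (T.subConst μ) := by
  intro y
  obtain ⟨x, rfl⟩ := hl y
  have hx := hdom x.2
  rw [pRan_eq_range] at hx
  show T.subConst l x ∈ LinearMap.range (T.subConst μ).toFun
  have hy : T.subConst l x = T.subConst μ ⟨x, x.2⟩ + μ • (x : H) - l • (x : H) := by
    rw [subConst_apply, subConst_apply, sub_add_cancel]
  rw [hy]
  exact Submodule.sub_mem _ (Submodule.add_mem _ ⟨_, rfl⟩ (Submodule.smul_mem _ μ hx))
    (Submodule.smul_mem _ l hx)

theorem isBddInvertible_subConst_of_bijective [CompleteSpace H] {T : H →ₗ.[ℂ] H} {l μ : ℂ}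
    (hl : (T.subConst l).IsBddInvertible) (hμ : Function.Bijective (T.subConst μ)) :
    (T.subConst μ).IsBddInvertible := by
  obtain ⟨R, hR_right, hR_left⟩ := hl
  let Rd : H → (T.subConst μ).domain := fun y => ⟨R y, (hR_right y).1⟩
  have hRd : Function.Bijective Rd := by
    refine ⟨fun y y' h => ?_, fun x => ⟨T.subConst l ⟨x, x.2⟩, Subtype.ext (hR_left _)⟩⟩
    rw [← (hR_right y).2, ← (hR_right y').2]
    exact congrArg (T.subConst l) (Subtype.ext (congrArg Subtype.val h))
  let G : H →L[ℂ] H := ContinuousLinearMap.id ℂ H + (l - μ) • R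
  have hSR : ∀ y, T.subConst μ (Rd y) = G y := by
    intro y
    have hy := eq_add_of_sub_eq ((subConst_apply _ _ _).symm.trans (hR_right y).2)
    refine (subConst_apply _ _ _).trans ?_
    change T ⟨R y, _⟩ - μ • R y = y + (l - μ) • R y
    rw [hy]
    module
  have hG : Function.Bijective G := by
    rw [show ⇑G = T.subConst μ ∘ Rd from funext fun y => (hSR y).symm]
    exact hμ.comp hRd
  let E := ContinuousLinearEquiv.ofBijective G (LinearMap.ker_eq_bot.mpr hG.1)
    (LinearMap.range_eq_top.mpr hG.2)
  refine ⟨R.comp (E.symm : H →L[ℂ] H), fun y => ⟨(hR_right _).1, ?_⟩, fun x => ?_⟩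
  · exact (hSR _).trans (E.apply_symm_apply y)
  · exact congrArg Subtype.val (hμ.1 ((hSR _).trans (E.apply_symm_apply _)) :
      Rd (E.symm (T.subConst μ x)) = x)

variable {A B : H →ₗ.[ℂ] H} {μ : ℂ}

/-- A solution `u` of `(AB - μ) u = w` yields `(BA - μ) (B u) = B w`. -/
theorem pRan_subset_pRan_pComp_subConst (hAB : Function.Surjective ((A.pComp B).subConst μ)) :
    B.pRan ⊆ ((B.pComp A).subConst μ).pRan := by
  rintro _ ⟨w, rfl⟩
  obtain ⟨⟨u, hu⟩, hABu⟩ := hAB w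
  obtain ⟨huB, hBu⟩ := mem_pComp_domain.mp hu
  rw [subConst_apply, pComp_apply _ huB hBu] at hABu
  have hABu' : A ⟨_, hBu⟩ = w + μ • u := eq_add_of_sub_eq hABu
  have hA : A ⟨_, hBu⟩ ∈ B.domain := hABu' ▸ B.domain.add_mem w.2 (B.domain.smul_mem μ huB)
  refine ⟨⟨B ⟨u, huB⟩, mem_pComp_domain.mpr ⟨hBu, hA⟩⟩, (subConst_apply _ _ _).trans ?_⟩
  have hsplit : (⟨_, hA⟩ : B.domain) = w + μ • ⟨u, huB⟩ := Subtype.ext hABu'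
  rw [pComp_apply _ hBu hA, hsplit, map_add, map_smul, add_sub_cancel_right]

theorem domain_subset_pRan_of_pKer_eq_zero (hAB : Function.Surjective (A.pComp B))
    (hA : A.pKer = {0}) : (A.domain : Set H) ⊆ B.pRan := by
  intro z hz
  obtain ⟨⟨u, hu⟩, hABu⟩ := hAB (A ⟨z, hz⟩)
  obtain ⟨huB, hBu⟩ := mem_pComp_domain.mp hu
  rw [pComp_apply _ huB hBu] at hABu
  have hker : (B ⟨u, huB⟩ - z : H) ∈ A.pKer :=
    ⟨A.domain.sub_mem hBu hz, by rw [← sub_eq_zero] at hABu; exact (A.map_sub _ _).trans hABu⟩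
  rw [hA, Set.mem_singleton_iff, sub_eq_zero] at hker
  exact ⟨⟨u, huB⟩, hker⟩

theorem injective_pComp_subConst_swap (hAB : Function.Injective ((A.pComp B).subConst μ))
    (hA : μ = 0 → A.pKer = {0}) : Function.Injective ((B.pComp A).subConst μ) := by
  refine (injective_iff_map_eq_zero ((B.pComp A).subConst μ).toFun).mpr ?_
  rintro ⟨x, hx⟩ hBAx
  obtain ⟨hxA, hAx⟩ := mem_pComp_domain.mp hx
  change (B.pComp A).subConst μ ⟨x, hx⟩ = 0 at hBAx
  rw [subConst_apply, pComp_apply _ hxA hAx, sub_eq_zero] at hBAx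
  have hBAx_mem : B ⟨_, hAx⟩ ∈ A.domain := hBAx ▸ A.domain.smul_mem μ hxA
  have hAx_zero : A ⟨x, hxA⟩ = 0 := by
    have hsplit : (⟨_, hBAx_mem⟩ : A.domain) = μ • ⟨x, hxA⟩ := Subtype.ext hBAx
    refine congrArg Subtype.val
      (@hAB ⟨_, mem_pComp_domain.mpr ⟨hAx, hBAx_mem⟩⟩ 0 ?_)
    rw [map_zero, subConst_apply, pComp_apply _ hAx hBAx_mem, hsplit, map_smul, sub_self]
  have hμx : μ • x = 0 := by
    have hB0 : (⟨_, hAx⟩ : B.domain) = 0 := Subtype.ext hAx_zero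
    rw [← hBAx, hB0, map_zero]
  refine Subtype.ext ?_
  rcases eq_or_ne μ 0 with rfl | hμ
  · exact (hA rfl ▸ ⟨hxA, hAx_zero⟩ : x ∈ ({0} : Set H))
  · exact (smul_eq_zero.mp hμx).resolve_left hμ

theorem surjective_pComp_subConst_swap (hAB : Function.Surjective ((A.pComp B).subConst μ))
    (hA : μ = 0 → A.pKer = {0}) {l : ℂ} (hl : Function.Surjective ((B.pComp A).subConst l)) :
    Function.Surjective ((B.pComp A).subConst μ) := by
  have hB := pRan_subset_pRan_pComp_subConst hAB
  refine surjective_subConst_of_domain_subset hl ?_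
  rcases eq_or_ne μ 0 with rfl | hμ
  · rw [subConst_zero] at hAB
    intro x hx
    exact hB (domain_subset_pRan_of_pKer_eq_zero hAB (hA rfl) (mem_pComp_domain.mp hx).1)
  · exact domain_subset_pRan_subConst hμ ((pRan_pComp_subset B A).trans hB)

end Banach

section Hilbert

variable {H : Type*} [NormedAddCommGroup H] [InnerProductSpace ℂ H] [CompleteSpace H]

theorem pKer_adjoint_eq_zero_of_surjective {T : H →ₗ.[ℂ] H} (hT : Dense (T.domain : Set H))
    (hsurj : Function.Surjective T) : T.adjoint.pKer = {0} := by
  refine Set.eq_singleton_iff_unique_mem.mpr ⟨⟨zero_mem _, T.adjoint.map_zero⟩, ?_⟩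
  rintro x ⟨hx, hx0⟩
  obtain ⟨u, hu⟩ := hsurj x
  have h := adjoint_isFormalAdjoint hT ⟨x, hx⟩ u
  rw [hx0, hu, inner_zero_left] at h
  exact inner_self_eq_zero.mp h.symm

theorem isBddInvertible_pComp_subConst_swap {A B : H →ₗ.[ℂ] H} {μ l : ℂ}
    (hdA : Dense (A.domain : Set H)) (hkA : A.pKer = A.adjoint.pKer)
    (hAB : ((A.pComp B).subConst μ).IsBddInvertible)
    (hl : ((B.pComp A).subConst l).IsBddInvertible) :
    ((B.pComp A).subConst μ).IsBddInvertible := by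
  have hA : μ = 0 → A.pKer = {0} := by
    rintro rfl
    have hsurj := hAB.bijective.2
    rw [subConst_zero] at hsurj
    rw [hkA]
    exact pKer_adjoint_eq_zero_of_surjective hdA fun y => pRan_pComp_subset A B (hsurj y)
  exact isBddInvertible_subConst_of_bijective hl
    ⟨injective_pComp_subConst_swap hAB.bijective.1 hA,
      surjective_pComp_subConst_swap hAB.bijective.2 hA hl.bijective.2⟩

end Hilbert

end LinearPMap

theorem statement_5_general {H : Type*} [NormedAddCommGroup H] [InnerProductSpace ℂ H] [CompleteSpace H]
    (A B : H →ₗ.[ℂ] H)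
    (hdA : Dense (A.domain : Set H)) (hdB : Dense (B.domain : Set H))
    (hsAB : (A.pComp B).pSpectrum ≠ Set.univ) (hsBA : (B.pComp A).pSpectrum ≠ Set.univ)
    (hkA : A.pKer = A.adjoint.pKer) (hkB : B.pKer = B.adjoint.pKer) :
    (A.pComp B).pSpectrum = (B.pComp A).pSpectrum := by
  obtain ⟨l₁, hl₁⟩ := (Set.ne_univ_iff_exists_notMem _).mp hsAB
  obtain ⟨l₂, hl₂⟩ := (Set.ne_univ_iff_exists_notMem _).mp hsBA
  ext μ
  exact not_congr ⟨fun h => isBddInvertible_pComp_subConst_swap hdA hkA h (not_not.mp hl₂),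
    fun h => isBddInvertible_pComp_subConst_swap hdB hkB h (not_not.mp hl₁)⟩

/-- if `σ(AB) ≠ ℂ`, `σ(BA) ≠ ℂ`, `ker A = ker A*` and `ker B = ker B*`,
then `σ(AB) = σ(BA)`. -/
theorem statement_5 {H : Type*} [NormedAddCommGroup H] [InnerProductSpace ℂ H] [CompleteSpace H]
    (A B : H →ₗ.[ℂ] H)
    (hdA : Dense (A.domain : Set H)) (hdB : Dense (B.domain : Set H))
    (hcA : A.IsClosable) (hcB : B.IsClosable)
    (hsAB : (A.pComp B).pSpectrum ≠ Set.univ) (hsBA : (B.pComp A).pSpectrum ≠ Set.univ)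
    (hkA : A.pKer = A.adjoint.pKer) (hkB : B.pKer = B.adjoint.pKer) :
    (A.pComp B).pSpectrum = (B.pComp A).pSpectrum :=
  statement_5_general A B hdA hdB hsAB hsBA hkA hkB
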